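/- Let F(x₁,x₂) := e^{-Q(x₁,x₂)} where Q(x₁,x₂) = a₁x₁² + a₂x₁x₂ + a₃x₂² is positive definite with a₁ > 0. Then ∫₀^∞ F(x₁, x₂) dx₁ = (√π/(2√a₁)) e^{-m²x₂²/4} (1 - E(a₂x₂/(2√(a₁π)))), where m² = 4a₃ - a₂²/a₁ and E(u) = 2∫₀ᵘ e^{-πω²} dω. -/

import Mathlib

/-!
Completing the square in `x₁` turns the integrand into a constant multiple of a Gaussian
`e^{-a₁(x₁ + b)²}` with `b = a₂x₂/(2a₁)`; after the shift `x₁ ↦ x₁ - b` the half-line integral is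
the full half-line Gaussian integral `√π/(2√a₁)` minus `∫₀ᵇ e^{-a₁x²} dx`, and the substitution
`x = √(π/a₁) ω` turns the latter into `√π/(2√a₁) · E(√(a₁/π) b)`.
-/

open MeasureTheory Real

/-- The rescaled error function `E(u) = 2∫₀ᵘ e^{-πω²} dω`. -/
noncomputable def rescaledErf (u : ℝ) : ℝ :=
  2 * ∫ ω in (0:ℝ)..u, Real.exp (-Real.pi * ω ^ 2)

theorem integral_Ioi_comp_add_right {E : Type*} [NormedAddCommGroup E] [NormedSpace ℝ E]
    (f : ℝ → E) (a b : ℝ) : ∫ x in Set.Ioi a, f (x + b) = ∫ x in Set.Ioi (a + b), f x := by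
  have h := (measurePreserving_add_right volume b).setIntegral_preimage_emb
    (measurableEmbedding_addRight b) f (Set.Ioi (a + b))
  simpa using h

theorem intervalIntegral_gaussian_eq_rescaledErf {a : ℝ} (ha : 0 < a) (b : ℝ) :
    ∫ x in (0:ℝ)..b, exp (-a * x ^ 2) = √π / (2 * √a) * rescaledErf (√(a / π) * b) := by
  have hc : 0 < √(a / π) := sqrt_pos.mpr (div_pos ha pi_pos)
  have hscale : ∀ x : ℝ, -π * (√(a / π) * x) ^ 2 = -a * x ^ 2 := fun x => by
    rw [mul_pow, sq_sqrt (div_pos ha pi_pos).le]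
    field_simp
  have h := intervalIntegral.integral_comp_mul_left
    (fun ω => exp (-π * ω ^ 2)) (a := 0) (b := b) hc.ne'
  simp only [hscale, mul_zero, smul_eq_mul] at h
  rw [h, rescaledErf, sqrt_div' _ pi_pos.le]
  field_simp

theorem integral_gaussian_Ioi_eq_one_sub_rescaledErf {a : ℝ} (ha : 0 < a) (b : ℝ) :
    ∫ x in Set.Ioi b, exp (-a * x ^ 2) =
      √π / (2 * √a) * (1 - rescaledErf (√(a / π) * b)) := by
  have hsplit := intervalIntegral.integral_Ioi_sub_Ioi'
    ((integrable_exp_neg_mul_sq ha).integrableOn (s := Set.Ioi 0))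
    ((integrable_exp_neg_mul_sq ha).integrableOn (s := Set.Ioi b))
  rw [integral_gaussian_Ioi, intervalIntegral_gaussian_eq_rescaledErf ha,
    sqrt_div pi_pos.le] at hsplit
  linear_combination -hsplit

theorem quadratic_eq_mul_add_sq_add {a₁ : ℝ} (ha₁ : a₁ ≠ 0) (a₂ a₃ x₁ x₂ : ℝ) :
    a₁ * x₁ ^ 2 + a₂ * x₁ * x₂ + a₃ * x₂ ^ 2 =
      a₁ * (x₁ + a₂ * x₂ / (2 * a₁)) ^ 2 + (4 * a₃ - a₂ ^ 2 / a₁) * x₂ ^ 2 / 4 := by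
  field_simp
  ring

theorem integral_gaussian_halfline (a₁ a₂ a₃ : ℝ) (ha₁ : 0 < a₁)
    (hdisc : 0 < 4 * a₁ * a₃ - a₂ ^ 2) (x₂ : ℝ) :
    ∫ x₁ in Set.Ioi (0:ℝ),
        Real.exp (-(a₁ * x₁ ^ 2 + a₂ * x₁ * x₂ + a₃ * x₂ ^ 2)) =
      Real.sqrt Real.pi / (2 * Real.sqrt a₁) *
        Real.exp (-(Real.sqrt (4 * a₃ - a₂ ^ 2 / a₁)) ^ 2 * x₂ ^ 2 / 4) *
        (1 - rescaledErf (a₂ * x₂ / (2 * Real.sqrt (a₁ * Real.pi)))) := by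
  set b := a₂ * x₂ / (2 * a₁) with hb
  set m2 := 4 * a₃ - a₂ ^ 2 / a₁ with hm2
  have hm : √m2 ^ 2 = m2 := sq_sqrt <| by
    rw [sub_nonneg, div_le_iff₀ ha₁]
    linarith
  have harg : √(a₁ / π) * b = a₂ * x₂ / (2 * √(a₁ * π)) := by
    rw [hb, sqrt_div ha₁.le, sqrt_mul ha₁.le]
    have hsq : √a₁ ^ 2 = a₁ := sq_sqrt ha₁.le
    have : 0 < √a₁ := sqrt_pos.mpr ha₁
    have : 0 < √π := sqrt_pos.mpr pi_pos
    field_simp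
    rw [hsq]
    ring
  calc ∫ x₁ in Set.Ioi (0:ℝ), exp (-(a₁ * x₁ ^ 2 + a₂ * x₁ * x₂ + a₃ * x₂ ^ 2))
      = ∫ x₁ in Set.Ioi (0:ℝ), exp (-a₁ * (x₁ + b) ^ 2) * exp (-√m2 ^ 2 * x₂ ^ 2 / 4) := by
        congr 1 with x₁
        rw [quadratic_eq_mul_add_sq_add ha₁.ne', hm, ← exp_add, hb, hm2]
        ring_nf
    _ = (∫ x in Set.Ioi b, exp (-a₁ * x ^ 2)) * exp (-√m2 ^ 2 * x₂ ^ 2 / 4) := by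
        rw [integral_mul_const, integral_Ioi_comp_add_right (fun x => exp (-a₁ * x ^ 2)),
          zero_add]
    _ = _ := by
        rw [integral_gaussian_Ioi_eq_one_sub_rescaledErf ha₁, harg]
        ring
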